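/- Let H ≅ G_a^s act on A^n = A^s × V by translations on the first factor. Then any automorphism f of A^n normalizing H has the form f(x,v) = (Ax + g_1(v), g_2(v)) with A ∈ GL_s(k), g_1 : V → A^s a morphism, and g_2 an automorphism of V. -/

import Mathlib

open MvPolynomial

/-- The translation by `a ∈ k^s` on `𝔸^s × V`, as the induced `k`-algebra endomorphism of
`k[𝔸^s × V] = (k[V])[x₁,…,x_s]`, i.e. `xᵢ ↦ xᵢ + aᵢ`, identity on `k[V] = S`. -/
noncomputable def translationHom {k S : Type} [Field k] [CommRing S] [Algebra k S]
    {s : ℕ} (a : Fin s → k) :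
    MvPolynomial (Fin s) S →ₐ[k] MvPolynomial (Fin s) S :=
  (MvPolynomial.aeval
    (fun i : Fin s => (X i : MvPolynomial (Fin s) S) + C (algebraMap k S (a i)))).restrictScalars k


section Aux
variable {k S : Type} [Field k] [CommRing S] [Algebra k S] {s : ℕ}

lemma tau_C (a : Fin s → k) (q : S) : translationHom (S := S) a (C q) = C q := by
  simp [translationHom]

lemma tau_X (a : Fin s → k) (i : Fin s) :
    translationHom (S := S) a (X i) = X i + C (algebraMap k S (a i)) := by
  simp [translationHom]

lemma pderiv_tau (a : Fin s → k) (j : Fin s) (p : MvPolynomial (Fin s) S) :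
    pderiv j (translationHom a p) = translationHom a (pderiv j p) := by
  induction p using MvPolynomial.induction_on with
  | C q => rw [tau_C, pderiv_C, map_zero]
  | add p q hp hq => simp only [map_add, hp, hq]
  | mul_X p i hp =>
    have hXd : translationHom (S := S) a (pderiv j (X i)) = pderiv j (X i) := by
      by_cases hij : i = j
      · subst hij; rw [pderiv_X_self, map_one]
      · rw [pderiv_X_of_ne hij, map_zero]
    simp only [map_mul, tau_X, pderiv_mul, map_add, pderiv_C, add_zero, hp, hXd]

lemma tau_linear (a : Fin s → k) (w : Fin s → S) (q : S) :
    translationHom (S := S) a ((∑ j, C (w j) * X j) + C q)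
      = ((∑ j, C (w j) * X j) + C q) + C (∑ j, w j * algebraMap k S (a j)) := by
  rw [map_add, map_sum, tau_C]
  have hterm : ∀ j, translationHom (S := S) a (C (w j) * X j)
      = C (w j) * X j + C (w j * algebraMap k S (a j)) := by
    intro j; rw [map_mul, tau_C, tau_X, mul_add, C_mul]
  simp only [hterm]
  rw [Finset.sum_add_distrib, ← map_sum C (fun j => w j * algebraMap k S (a j))]
  abel

lemma coeff_pderiv (j : Fin s) (m : Fin s →₀ ℕ) (p : MvPolynomial (Fin s) S) :
    coeff m (pderiv j p) = (m j + 1) • coeff (m + Finsupp.single j 1) p := by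
  induction p using MvPolynomial.induction_on' with
  | monomial d a =>
    rw [pderiv_monomial, coeff_monomial, coeff_monomial]
    by_cases h : d = m + Finsupp.single j 1
    · subst h
      rw [if_pos (by rw [add_tsub_cancel_right])]
      simp [mul_comm, nsmul_eq_mul]
    · rw [if_neg h, smul_zero]
      by_cases hdj : d j = 0
      · have : a * (d j) = 0 := by simp [hdj]
        simp [this]
      · rw [if_neg]
        intro he
        apply h
        rw [← he, tsub_add_cancel_of_le]
        exact Finsupp.single_le_iff.mpr (Nat.one_le_iff_ne_zero.mpr hdj)
  | add p q hp hq => simp [hp, hq, smul_add, mul_add]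

lemma totalDegree_pderiv_le (j : Fin s) (p : MvPolynomial (Fin s) S) {n : ℕ}
    (h : p.totalDegree ≤ n + 1) : (pderiv j p).totalDegree ≤ n := by
  apply Finset.sup_le
  intro m hm
  rw [MvPolynomial.mem_support_iff, _root_.coeff_pderiv] at hm
  have h2 : coeff (m + Finsupp.single j 1) p ≠ 0 := by
    intro h0; rw [h0, smul_zero] at hm; exact hm rfl
  have := le_totalDegree (p := p) (MvPolynomial.mem_support_iff.mpr h2)
  have hsum : ((m + Finsupp.single j 1).sum fun _ e => e) = (m.sum fun _ e => e) + 1 := by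
    rw [Finsupp.sum_add_index (by simp) (by intros; rfl), Finsupp.sum_single_index rfl]
  omega

lemma eq_C_of_pderiv_eq_zero [Algebra ℚ S] (p : MvPolynomial (Fin s) S)
    (h : ∀ j, pderiv j p = 0) : p = C (coeff 0 p) := by
  ext m
  rw [coeff_C]
  by_cases hm : 0 = m
  · subst hm; simp
  · rw [if_neg hm]
    have : ∃ j, m j ≠ 0 := by
      by_contra hc
      push_neg at hc
      apply hm; symm; ext i; simp [hc i]
    obtain ⟨j, hj⟩ := this
    set m' : Fin s →₀ ℕ := m - Finsupp.single j 1 with hm'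
    have hkey := coeff_pderiv j m' p
    rw [h j] at hkey
    have hadd : m' + Finsupp.single j 1 = m :=
      tsub_add_cancel_of_le (Finsupp.single_le_iff.mpr (Nat.one_le_iff_ne_zero.mpr hj))
    rw [hadd] at hkey
    have hz : ((m' j + 1) : ℕ) • coeff m p = 0 := hkey.symm
    have hns : ((m' j + 1 : ℕ) : ℚ) ≠ 0 := Nat.cast_ne_zero.mpr (Nat.succ_ne_zero _)
    have h3 : ((m' j + 1 : ℕ) : ℚ) • coeff m p = 0 := by
      rw [Nat.cast_smul_eq_nsmul]; exact hz
    calc coeff m p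
        = (((m' j + 1 : ℕ) : ℚ)⁻¹ * ((m' j + 1 : ℕ) : ℚ)) • coeff m p := by
          rw [inv_mul_cancel₀ hns, one_smul]
      _ = ((m' j + 1 : ℕ) : ℚ)⁻¹ • (((m' j + 1 : ℕ) : ℚ) • coeff m p) := mul_smul _ _ _
      _ = 0 := by rw [h3, smul_zero]

lemma decomp_of_pderiv_C [Algebra ℚ S] (p : MvPolynomial (Fin s) S) (w : Fin s → S)
    (hw : ∀ j, pderiv j p = C (w j)) :
    ∃ q, p = (∑ j, C (w j) * X j) + C q := by
  set r := p - ∑ j, C (w j) * X j with hrdef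
  have hr : ∀ l, pderiv l r = 0 := by
    intro l
    have hsum : pderiv l (∑ j, C (w j) * X j) = C (w l) := by
      rw [map_sum]
      rw [Finset.sum_eq_single l]
      · rw [pderiv_C_mul, pderiv_X_self, mul_one]
      · intro j _ hj
        rw [pderiv_C_mul, pderiv_X_of_ne hj, mul_zero]
      · intro h; exact absurd (Finset.mem_univ l) h
    rw [hrdef, map_sub, hw l, hsum, sub_self]
  refine ⟨coeff 0 r, ?_⟩
  have := eq_C_of_pderiv_eq_zero r hr
  rw [← this, hrdef]
  ring

lemma eq_C_of_strongInvariant [Algebra ℚ S] (n : ℕ) (p : MvPolynomial (Fin s) S)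
    (hd : p.totalDegree ≤ n) (h : ∀ a : Fin s → k, translationHom a p = p) :
    ∃ q, p = C q := by
  induction n generalizing p with
  | zero =>
    refine ⟨coeff 0 p, eq_C_of_pderiv_eq_zero p fun j => ?_⟩
    ext m
    rw [_root_.coeff_pderiv, coeff_zero]
    have hz : coeff (m + Finsupp.single j 1) p = 0 := by
      by_contra hc
      have := le_totalDegree (p := p) (MvPolynomial.mem_support_iff.mpr hc)
      have hsum : ((m + Finsupp.single j 1).sum fun _ e => e) = (m.sum fun _ e => e) + 1 := by
        rw [Finsupp.sum_add_index (by simp) (by intros; rfl), Finsupp.sum_single_index rfl]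
      omega
    rw [hz, smul_zero]
  | succ n ih =>
    have hw : ∀ j, ∃ wj, pderiv j p = C wj := fun j =>
      ih (pderiv j p) (totalDegree_pderiv_le j p hd)
        (fun a => by rw [← pderiv_tau, h a])
    choose w hwspec using hw
    obtain ⟨q, hq⟩ := decomp_of_pderiv_C p w hwspec
    have hw0 : ∀ j, w j = 0 := by
      intro j
      have hinv := h ((Pi.single j 1 : Fin s → k))
      rw [hq, tau_linear] at hinv
      have hC : (C (∑ l, w l * algebraMap k S ((Pi.single j 1 : Fin s → k) l)) : MvPolynomial (Fin s) S)
          = 0 := by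
        have := add_eq_left.mp hinv
        exact this
      have hsum0 : (∑ l, w l * algebraMap k S ((Pi.single j 1 : Fin s → k) l)) = 0 :=
        C_injective (Fin s) S (hC.trans (map_zero (C : S →+* MvPolynomial (Fin s) S)).symm)
      rw [Finset.sum_eq_single j] at hsum0
      · rwa [Pi.single_eq_same, map_one, mul_one] at hsum0
      · intro l _ hl
        rw [Pi.single_eq_of_ne hl, map_zero, mul_zero]
      · intro hj; exact absurd (Finset.mem_univ j) hj
    refine ⟨q, ?_⟩
    rw [hq]
    simp [hw0]

lemma linear_of_quasiInvariant [Algebra ℚ S] (p : MvPolynomial (Fin s) S)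
    (h : ∀ a : Fin s → k, ∃ c : S, translationHom a p = p + C c) :
    ∃ (w : Fin s → S) (q : S), p = (∑ j, C (w j) * X j) + C q := by
  have hw : ∀ j, ∃ wj, pderiv j p = C wj := by
    intro j
    refine eq_C_of_strongInvariant (k := k) (pderiv j p).totalDegree (pderiv j p) le_rfl ?_
    intro a
    obtain ⟨c, hc⟩ := h a
    rw [← pderiv_tau, hc, map_add, pderiv_C, add_zero]
  choose w hwspec using hw
  obtain ⟨q, hq⟩ := decomp_of_pderiv_C p w hwspec
  exact ⟨w, q, hq⟩

lemma sum_single_mul' (c : Fin s → S) (j : Fin s) :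
    (∑ l, c l * algebraMap k S ((Pi.single j 1 : Fin s → k) l)) = c j := by
  rw [Finset.sum_eq_single j]
  · rw [Pi.single_eq_same, map_one, mul_one]
  · intro l _ hl; rw [Pi.single_eq_of_ne hl, map_zero, mul_zero]
  · intro hj; exact absurd (Finset.mem_univ j) hj

lemma helper [Nontrivial S] [Algebra ℚ S]
    (f : MvPolynomial (Fin s) S ≃ₐ[k] MvPolynomial (Fin s) S)
    (h : ∀ a : Fin s → k, ∃ b : Fin s → k,
      ∀ p, translationHom a (f p) = f (translationHom b p)) :
    ∃ (A : Matrix (Fin s) (Fin s) k) (g₁ : Fin s → S) (σ : S →ₐ[k] S),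
      (∀ q : S, f (C q) = C (σ q)) ∧
      ∀ i, f (X i) = (∑ j, C (algebraMap k S (A i j)) * X j) + C (g₁ i) := by
  have hinj := C_injective (Fin s) S
  -- constants map to constants
  have hCq : ∀ q : S, ∃ q', f (C q) = C q' := by
    intro q
    refine eq_C_of_strongInvariant (k := k) (f (C q)).totalDegree _ le_rfl ?_
    intro a
    obtain ⟨b, hb⟩ := h a
    rw [hb, tau_C]
  choose σ₀ hσ₀ using hCq
  have halgR : ∀ c : k, (C (algebraMap k S c) : MvPolynomial (Fin s) S)
      = algebraMap k (MvPolynomial (Fin s) S) c := by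
    intro c; rw [IsScalarTower.algebraMap_apply k S (MvPolynomial (Fin s) S), algebraMap_eq]
  have halg : ∀ c : k, σ₀ (algebraMap k S c) = algebraMap k S c := by
    intro c
    apply hinj
    rw [← hσ₀, halgR c, AlgEquiv.commutes, ← halgR c]
  let σ : S →ₐ[k] S :=
  { toFun := σ₀
    map_one' := by apply hinj; rw [← hσ₀, map_one, map_one]
    map_mul' := fun x y => by
      apply hinj
      show C (σ₀ (x * y)) = C (σ₀ x * σ₀ y)
      rw [← hσ₀, C_mul, map_mul, hσ₀, hσ₀, ← C_mul]
    map_zero' := by apply hinj; rw [← hσ₀, map_zero, map_zero]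
    map_add' := fun x y => by
      apply hinj
      show C (σ₀ (x + y)) = C (σ₀ x + σ₀ y)
      rw [← hσ₀, C_add, map_add, hσ₀, hσ₀, ← C_add]
    commutes' := halg }
  -- X i are affine linear
  have hXq : ∀ i, ∃ (w : Fin s → S) (q : S),
      f (X i) = (∑ j, C (w j) * X j) + C q := by
    intro i
    apply linear_of_quasiInvariant (k := k)
    intro a
    obtain ⟨b, hb⟩ := h a
    refine ⟨algebraMap k S (b i), ?_⟩
    rw [hb (X i), tau_X, map_add, hσ₀, halg]
  choose w q hwq using hXq
  refine ⟨fun i j => (h (Pi.single j 1 : Fin s → k)).choose i, q, σ, hσ₀, ?_⟩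
  intro i
  have hwA : ∀ j, w i j
      = algebraMap k S ((h (Pi.single j 1 : Fin s → k)).choose i) := by
    intro j
    have hb := (h (Pi.single j 1 : Fin s → k)).choose_spec (X i)
    rw [tau_X, map_add, hσ₀, halg, hwq i, tau_linear, sum_single_mul'] at hb
    exact hinj (add_left_cancel hb)
  rw [hwq i]
  congr 1
  exact Finset.sum_congr rfl fun j _ => by rw [hwA j]

lemma coeff_single_linear (l : Fin s) (c : Fin s → S) (d : S) :
    coeff (Finsupp.single l 1) ((∑ j, C (c j) * X j) + C d) = c l := by
  rw [coeff_add, coeff_C, if_neg (fun hh => one_ne_zero (Finsupp.single_eq_zero.mp hh.symm)),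
    add_zero, coeff_sum]
  rw [Finset.sum_eq_single l]
  · rw [coeff_C_mul, coeff_X, if_pos rfl, mul_one]
  · intro j _ hj
    rw [coeff_C_mul, coeff_X', if_neg (fun hh => hj (Finsupp.single_left_inj one_ne_zero |>.mp hh)),
      mul_zero]
  · intro hl; exact absurd (Finset.mem_univ l) hl

theorem stmt15' [CharZero k] [IsAlgClosed k] [Nontrivial S]
    (f : MvPolynomial (Fin s) S ≃ₐ[k] MvPolynomial (Fin s) S)
    (hnorm₁ : ∀ a : Fin s → k, ∃ b : Fin s → k,
      ∀ p, f (translationHom a p) = translationHom b (f p))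
    (hnorm₂ : ∀ a : Fin s → k, ∃ b : Fin s → k,
      ∀ p, translationHom a (f p) = f (translationHom b p)) :
    ∃ (A : Matrix (Fin s) (Fin s) k), IsUnit A ∧
      ∃ (g₁ : Fin s → S) (g₂ : S ≃ₐ[k] S),
        (∀ p : S, f (C p) = C (g₂ p)) ∧
        (∀ i : Fin s, f (X i) =
          (∑ j : Fin s, C (algebraMap k S (A i j)) * X j) + C (g₁ i)) := by
  letI : Algebra ℚ S := RingHom.toAlgebra ((algebraMap k S).comp (algebraMap ℚ k))
  obtain ⟨A, g₁, σ, hσC, hσX⟩ := helper f hnorm₂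
  have hsymm : ∀ a : Fin s → k, ∃ b : Fin s → k,
      ∀ p, translationHom a (f.symm p) = f.symm (translationHom b p) := by
    intro a
    obtain ⟨b, hb⟩ := hnorm₁ a
    refine ⟨b, fun p => ?_⟩
    apply f.injective
    rw [hb (f.symm p), f.apply_symm_apply, f.apply_symm_apply]
  obtain ⟨B, h₁, σ', hσ'C, hσ'X⟩ := helper f.symm hsymm
  have hid1 : ∀ q : S, σ (σ' q) = q := by
    intro q
    apply C_injective (Fin s) S
    rw [← hσC, ← hσ'C, f.apply_symm_apply]
  have hid2 : ∀ q : S, σ' (σ q) = q := by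
    intro q
    apply C_injective (Fin s) S
    rw [← hσ'C, ← hσC, f.symm_apply_apply]
  refine ⟨A, ?_, g₁, AlgEquiv.ofAlgHom σ σ' (AlgHom.ext hid1) (AlgHom.ext hid2), hσC, hσX⟩
  -- invertibility
  have hBA : B * A = 1 := by
    ext i l
    have hX : (X i : MvPolynomial (Fin s) S)
        = f ((∑ j, C (algebraMap k S (B i j)) * X j) + C (h₁ i)) := by
      conv_lhs => rw [← f.apply_symm_apply (X i)]
      rw [hσ'X i]
    have hfX : ∀ j, f (C (algebraMap k S (B i j)) * X j)
        = (∑ m, C (algebraMap k S (B i j) * algebraMap k S (A j m)) * X m)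
          + C (algebraMap k S (B i j) * g₁ j) := by
      intro j
      rw [map_mul, hσC, σ.commutes, hσX, mul_add, ← C_mul, Finset.mul_sum]
      congr 1
      exact Finset.sum_congr rfl fun m _ => by rw [← mul_assoc, ← C_mul]
    rw [map_add, map_sum, hσC] at hX
    rw [Finset.sum_congr rfl (fun j _ => hfX j)] at hX
    have hterm : ∀ j, coeff (Finsupp.single l 1)
        ((∑ m, C (algebraMap k S (B i j) * algebraMap k S (A j m)) * X m)
          + C (algebraMap k S (B i j) * g₁ j))
        = algebraMap k S (B i j) * algebraMap k S (A j l) :=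
      fun j => coeff_single_linear l _ _
    have hco := congrArg (coeff (Finsupp.single l 1)) hX
    rw [coeff_add, coeff_C,
      if_neg (fun hh => one_ne_zero (Finsupp.single_eq_zero.mp hh.symm)), add_zero,
      coeff_sum, Finset.sum_congr rfl (fun j _ => hterm j), coeff_X'] at hco
    have hco' : (if i = l then (1 : S) else 0)
        = ∑ j, algebraMap k S (B i j) * algebraMap k S (A j l) := by
      rcases eq_or_ne i l with hil | hil
      · simpa [hil] using hco
      · have hne : (Finsupp.single i 1 : Fin s →₀ ℕ) ≠ Finsupp.single l 1 :=
          fun hh => hil ((Finsupp.single_left_inj one_ne_zero).mp hh)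
        rw [if_neg hne] at hco
        rw [if_neg hil, hco]
    simp only [Matrix.mul_apply, Matrix.one_apply]
    apply (algebraMap k S).injective
    rw [map_sum, apply_ite (algebraMap k S), map_one, map_zero, hco']
    exact Finset.sum_congr rfl fun j _ => map_mul _ _ _
  exact (Matrix.isUnit_iff_isUnit_det A).mpr (Matrix.isUnit_det_of_left_inverse hBA)

end Aux

/-- let `H ≅ 𝔾ₐ^s` act on `𝔸ⁿ = 𝔸^s × V` by translations on the first
factor. Any automorphism `f` of `𝔸^s × V` normalizing `H` is of the form
`f(x,v) = (A x + g₁(v), g₂(v))` with `A ∈ GL_s(k)`, `g₁ : V → 𝔸^s` a morphism and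
`g₂ ∈ Aut(V)` — stated here contravariantly on the coordinate algebra
`(k[V])[x₁,…,x_s]`, with `S = k[V]`. -/
theorem stmt15 {k S : Type} [Field k] [CharZero k] [IsAlgClosed k]
    [CommRing S] [Algebra k S] [Nontrivial S] {s : ℕ}
    (f : MvPolynomial (Fin s) S ≃ₐ[k] MvPolynomial (Fin s) S)
    (hnorm₁ : ∀ a : Fin s → k, ∃ b : Fin s → k,
      ∀ p, f (translationHom a p) = translationHom b (f p))
    (hnorm₂ : ∀ a : Fin s → k, ∃ b : Fin s → k,
      ∀ p, translationHom a (f p) = f (translationHom b p)) :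
    ∃ (A : Matrix (Fin s) (Fin s) k), IsUnit A ∧
      ∃ (g₁ : Fin s → S) (g₂ : S ≃ₐ[k] S),
        (∀ p : S, f (C p) = C (g₂ p)) ∧
        (∀ i : Fin s, f (X i) =
          (∑ j : Fin s, C (algebraMap k S (A i j)) * X j) + C (g₁ i)) := by
  exact stmt15' f hnorm₁ hnorm₂
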